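/- Suppose assumptions (A1)–(A3) hold, so in particular η0 is nonincreasing, and set M(θ) := E[(Y − η_θ(|θ−X|²))(X − θ)]. Then for every θ ∈ Θ: (i) M(θ) = E[Cov(X, η0(|θ0−X|²) | |θ−X|²)], the expectation of the coordinatewise conditional covariances; (ii) M(θ0) = 0; and (iii) the conditional covariance Cov((θ−θ0)ᵀ(X−θ), η0(|θ0−X|²) | |θ−X|²) has an almost surely constant sign — it is almost surely nonpositive when η0 is nonincreasing (and almost surely nonnegative when η0 is nondecreasing) — so that (θ−θ0)ᵀ M(θ) = E[Cov((θ−θ0)ᵀ(X−θ), η0(|θ0−X|²) | |θ−X|²)] is nonpositive for nonincreasing η0. (Lemma F.1, parts (eq:m_cov) and (1): the population score has θ0 as a zero and points monotonically with respect to θ0.) -/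

import Mathlib

/-!
Write `g = ‖θ - X‖²`, `f = η0 (‖θ0 - X‖²)` and `Y = f + ε`. The score pairs the residual
`Y - E[f | g]` with `X - θ`. The noise `ε` is orthogonal to bounded functions of `X`, and
`f - E[f | g]` is orthogonal to bounded functions of `g`, so the score is the expected conditional
covariance of `X` and `f` given `g`. At `θ = θ0`, `f` is itself a function of `g` and the
covariance vanishes.

For the sign, let `U = ⟪θ - θ0, X - θ⟫`. Since `‖θ0 - X‖² = g + ‖θ - θ0‖² + 2 U`, given `g` the
response `f` is a nonincreasing function `φ (g + ‖θ - θ0‖² + 2 U)` of `U`. The conditional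
covariance equals `E[(U - E[U | g]) (f - φ (g + ‖θ - θ0‖² + 2 E[U | g])) | g]`, and the integrand
is pointwise nonpositive.
-/

open MeasureTheory Set Filter
open scoped RealInnerProductSpace ENNReal

section CondCov

variable {Ω : Type*} {m m' m₀ : MeasurableSpace Ω} {μ : Measure[m₀] Ω}

noncomputable def condCov (m : MeasurableSpace Ω) (U V : Ω → ℝ) (μ : Measure[m₀] Ω) : Ω → ℝ :=
  μ[U * V | m] - μ[U | m] * μ[V | m]

lemma Antitone.memLp_top_comp {φ : ℝ → ℝ} (hφ : Antitone φ) {C : ℝ} (hC : ∀ t, ‖φ t‖ ≤ C)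
    {h : Ω → ℝ} (hh : AEMeasurable h μ) : MemLp (fun ω => φ (h ω)) ∞ μ :=
  memLp_top_of_bound (hφ.measurable.comp_aemeasurable hh).aestronglyMeasurable C
    (ae_of_all _ fun _ => hC _)

variable {U V : Ω → ℝ}

lemma integrable_residual (hV : Integrable V μ) {ε Y r : Ω → ℝ} (hε : Integrable ε μ)
    (hY : ∀ ω, Y ω = V ω + ε ω) (hr : r =ᵐ[μ] μ[V | m]) :
    Integrable (fun ω => Y ω - r ω) μ := by
  refine ((hV.add hε).sub (integrable_condExp.congr hr.symm)).congr (ae_of_all _ fun ω => ?_)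
  simp [hY]

variable [IsFiniteMeasure μ]

lemma integrable_mul_of_memLp_top {F G : Ω → ℝ} (hF : MemLp F ∞ μ) (hG : MemLp G ∞ μ) :
    Integrable (F * G) μ :=
  (hG.mul hF).integrable le_top

lemma condCov_ae_eq_condExp_mul_sub (hm : m ≤ m₀) (hU : MemLp U ∞ μ) (hV : MemLp V ∞ μ)
    {h : Ω → ℝ} (hh : StronglyMeasurable[m] h) (hh' : MemLp h ∞ μ) :
    condCov m U V μ =ᵐ[μ] μ[(U - μ[U | m]) * (V - h) | m] := by
  have hmU : MemLp (μ[U | m]) ∞ μ := hU.condExp le_top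
  have hmU' : StronglyMeasurable[m] (μ[U | m]) := stronglyMeasurable_condExp
  have hUV := integrable_mul_of_memLp_top hU hV
  have hhU := integrable_mul_of_memLp_top hh' hU
  have hmUV := integrable_mul_of_memLp_top hmU hV
  have hmUh := integrable_mul_of_memLp_top hmU hh'
  have hsplit : (U - μ[U | m]) * (V - h) = (U * V - h * U) - (μ[U | m] * V - μ[U | m] * h) := by
    ring
  rw [hsplit]
  filter_upwards [condExp_sub (hUV.sub hhU) (hmUV.sub hmUh) m, condExp_sub hUV hhU m,
    condExp_sub hmUV hmUh m, condExp_mul_of_stronglyMeasurable_left hh hhU (hU.integrable le_top),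
    condExp_mul_of_stronglyMeasurable_left hmU' hmUV (hV.integrable le_top)]
    with ω h1 h2 h3 h4 h5
  simp only [condCov, Pi.sub_apply, Pi.mul_apply] at *
  rw [h1, h2, h3, h4, h5, condExp_of_stronglyMeasurable hm (hmU'.mul hh) hmUh]
  simp only [Pi.mul_apply]
  ring

lemma condCov_ae_eq_zero_of_stronglyMeasurable (hm : m ≤ m₀) (hU : MemLp U ∞ μ)
    (hV : MemLp V ∞ μ) (hVm : StronglyMeasurable[m] V) : condCov m U V μ =ᵐ[μ] 0 := by
  filter_upwards [condCov_ae_eq_condExp_mul_sub hm hU hV hVm hV] with ω hω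
  simp [hω]

lemma condCov_nonpos_of_antitone (hm : m ≤ m₀) (hU : MemLp U ∞ μ) {g : Ω → ℝ}
    (hg : Measurable[m] g) {φ : ℝ → ℝ} (hφ : Antitone φ) {C : ℝ} (hC : ∀ t, ‖φ t‖ ≤ C)
    {a : ℝ} (ha : 0 ≤ a) : condCov m U (fun ω => φ (g ω + a * U ω)) μ ≤ᵐ[μ] 0 := by
  set h : Ω → ℝ := fun ω => φ (g ω + a * (μ[U | m]) ω)
  have hmU : Measurable[m] (μ[U | m]) := stronglyMeasurable_condExp.measurable
  have hh : StronglyMeasurable[m] h :=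
    (hφ.measurable.comp (hg.add (hmU.const_mul a))).stronglyMeasurable
  have hh' : MemLp h ∞ μ :=
    hφ.memLp_top_comp hC (((hg.add (hmU.const_mul a)).mono hm le_rfl).aemeasurable)
  have hV : MemLp (fun ω => φ (g ω + a * U ω)) ∞ μ :=
    hφ.memLp_top_comp hC ((hg.mono hm le_rfl).aemeasurable.add (hU.1.aemeasurable.const_mul a))
  have hsign : (U - μ[U | m]) * ((fun ω => φ (g ω + a * U ω)) - h) ≤ 0 := by
    intro ω
    simp only [Pi.mul_apply, Pi.sub_apply, Pi.zero_apply, h]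
    rcases le_total (U ω) ((μ[U | m]) ω) with hle | hle
    · exact mul_nonpos_of_nonpos_of_nonneg (sub_nonpos.2 hle) (sub_nonneg.2 (hφ (by gcongr)))
    · exact mul_nonpos_of_nonneg_of_nonpos (sub_nonneg.2 hle) (sub_nonpos.2 (hφ (by gcongr)))
  filter_upwards [condCov_ae_eq_condExp_mul_sub hm hU hV hh hh',
    condExp_nonpos (m := m) (ae_of_all μ hsign)] with ω h1 h2
  exact h1 ▸ h2

lemma integral_mul_eq_zero_of_condExp_ae_eq_zero (hm : m ≤ m₀) {e q : Ω → ℝ}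
    (he : Integrable e μ) (he0 : μ[e | m] =ᵐ[μ] 0) (hq : StronglyMeasurable[m] q)
    (hq' : MemLp q ∞ μ) : ∫ ω, e ω * q ω ∂μ = 0 := by
  calc ∫ ω, e ω * q ω ∂μ = ∫ ω, (μ[e * q | m]) ω ∂μ := (integral_condExp hm).symm
    _ = ∫ ω, (μ[e | m] * q) ω ∂μ :=
      integral_congr_ae (condExp_mul_of_stronglyMeasurable_right hq (he.mul_of_top_left hq') he)
    _ = 0 := by
      rw [integral_congr_ae (he0.mul (EventuallyEq.refl _ q))]
      simp

lemma integral_sub_condExp_mul_eq_zero (hm : m ≤ m₀) (hV : Integrable V μ) {q : Ω → ℝ}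
    (hq : StronglyMeasurable[m] q) (hq' : MemLp q ∞ μ) :
    ∫ ω, (V ω - (μ[V | m]) ω) * q ω ∂μ = 0 := by
  have hcentred : μ[V - μ[V | m] | m] =ᵐ[μ] 0 := by
    filter_upwards [condExp_sub hV integrable_condExp m] with ω hω
    rw [hω, condExp_of_stronglyMeasurable hm stronglyMeasurable_condExp integrable_condExp]
    simp
  exact integral_mul_eq_zero_of_condExp_ae_eq_zero hm (hV.sub integrable_condExp) hcentred hq hq'

lemma integral_condCov (hm : m ≤ m₀) (hU : MemLp U ∞ μ) (hV : MemLp V ∞ μ) :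
    ∫ ω, condCov m U V μ ω ∂μ = ∫ ω, (V ω - (μ[V | m]) ω) * U ω ∂μ := by
  have hVc : Integrable (V - μ[V | m]) μ := (hV.integrable le_top).sub integrable_condExp
  have hmU : MemLp (μ[U | m]) ∞ μ := hU.condExp le_top
  calc ∫ ω, condCov m U V μ ω ∂μ
      = ∫ ω, (μ[(U - μ[U | m]) * (V - μ[V | m]) | m]) ω ∂μ :=
        integral_congr_ae (condCov_ae_eq_condExp_mul_sub hm hU hV stronglyMeasurable_condExp
          (hV.condExp le_top))
    _ = ∫ ω, ((V ω - (μ[V | m]) ω) * U ω - (V ω - (μ[V | m]) ω) * (μ[U | m]) ω) ∂μ := by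
        rw [integral_condExp hm]
        congr 1 with ω
        simp only [Pi.mul_apply, Pi.sub_apply]
        ring
    _ = ∫ ω, (V ω - (μ[V | m]) ω) * U ω ∂μ := by
        have h1 : Integrable (fun ω => (V ω - (μ[V | m]) ω) * U ω) μ := hVc.mul_of_top_left hU
        have h2 : Integrable (fun ω => (V ω - (μ[V | m]) ω) * (μ[U | m]) ω) μ :=
          hVc.mul_of_top_left hmU
        rw [integral_sub h1 h2,
          integral_sub_condExp_mul_eq_zero hm (hV.integrable le_top) stronglyMeasurable_condExp hmU,
          sub_zero]

lemma integral_residual_mul_eq_integral_condCov (hm : m ≤ m₀) (hm' : m' ≤ m₀)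
    (hU : MemLp U ∞ μ) (hUm : StronglyMeasurable[m'] U) (hV : MemLp V ∞ μ) {ε Y r : Ω → ℝ}
    (hε : Integrable ε μ) (hε0 : μ[ε | m'] =ᵐ[μ] 0) (hY : ∀ ω, Y ω = V ω + ε ω)
    (hr : r =ᵐ[μ] μ[V | m]) (c : ℝ) :
    ∫ ω, (Y ω - r ω) * (U ω - c) ∂μ = ∫ ω, condCov m U V μ ω ∂μ := by
  have hVc : Integrable (V - μ[V | m]) μ := (hV.integrable le_top).sub integrable_condExp
  have hUc : MemLp (fun ω => U ω - c) ∞ μ := hU.sub (memLp_const c)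
  calc ∫ ω, (Y ω - r ω) * (U ω - c) ∂μ
      = ∫ ω, ((V ω - (μ[V | m]) ω) * U ω - (V ω - (μ[V | m]) ω) * c + ε ω * (U ω - c)) ∂μ := by
        refine integral_congr_ae ?_
        filter_upwards [hr] with ω hω
        rw [hY, hω]
        ring
    _ = ∫ ω, (V ω - (μ[V | m]) ω) * U ω ∂μ := by
        have h1 : Integrable (fun ω => (V ω - (μ[V | m]) ω) * U ω) μ := hVc.mul_of_top_left hU
        have h2 : Integrable (fun ω => (V ω - (μ[V | m]) ω) * c) μ := hVc.mul_const c
        have h3 : Integrable (fun ω => ε ω * (U ω - c)) μ := hε.mul_of_top_left hUc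
        have h12 : Integrable (fun ω => (V ω - (μ[V | m]) ω) * U ω - (V ω - (μ[V | m]) ω) * c) μ :=
          h1.sub h2
        rw [integral_add h12 h3, integral_sub h1 h2,
          integral_sub_condExp_mul_eq_zero hm (hV.integrable le_top) stronglyMeasurable_const
            (memLp_const c),
          integral_mul_eq_zero_of_condExp_ae_eq_zero (q := fun ω => U ω - c) hm' hε hε0
            (hUm.sub stronglyMeasurable_const) hUc, sub_zero, add_zero]
    _ = ∫ ω, condCov m U V μ ω ∂μ := (integral_condCov hm hU hV).symm

end CondCov

lemma AntitoneOn.antitone_comp_max_zero {η : ℝ → ℝ} (hη : AntitoneOn η (Ici 0)) :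
    Antitone fun t => η (max t 0) :=
  fun _ _ hst => hη (mem_Ici.2 (le_max_right _ _)) (mem_Ici.2 (le_max_right _ _))
    (max_le_max hst le_rfl)

lemma AntitoneOn.norm_comp_max_zero_le {η : ℝ → ℝ} (hη : AntitoneOn η (Ici 0))
    (hη0 : ∀ t ∈ Ici (0 : ℝ), 0 ≤ η t) (t : ℝ) : ‖η (max t 0)‖ ≤ η 0 := by
  rw [Real.norm_of_nonneg (hη0 _ (mem_Ici.2 (le_max_right _ _)))]
  exact hη self_mem_Ici (mem_Ici.2 (le_max_right _ _)) (le_max_right _ _)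

lemma norm_sub_sq_eq_add_inner {F : Type*} [NormedAddCommGroup F] [InnerProductSpace ℝ F]
    (x θ θ0 : F) : ‖θ0 - x‖ ^ 2 = ‖θ - x‖ ^ 2 + ‖θ - θ0‖ ^ 2 + 2 * ⟪θ - θ0, x - θ⟫ := by
  rw [show θ0 - x = (θ - x) - (θ - θ0) by abel, norm_sub_sq_real,
    show θ - x = -(x - θ) by abel, inner_neg_left, real_inner_comm, norm_neg]
  ring

section SquaredDistanceModel

variable {d : ℕ} {Ω : Type*} {X : Ω → EuclideanSpace ℝ (Fin d)}

lemma measurable_comap_coord (j : Fin d) :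
    Measurable[MeasurableSpace.comap X inferInstance] fun ω => X ω j := by
  have := comap_measurable (m := (inferInstance : MeasurableSpace (EuclideanSpace ℝ (Fin d)))) X
  fun_prop

lemma measurable_comap_sum_mul_coord_sub (a θ : EuclideanSpace ℝ (Fin d)) :
    Measurable[MeasurableSpace.comap X inferInstance] fun ω => ∑ j, a j * (X ω j - θ j) :=
  Finset.measurable_sum _ fun j _ => ((measurable_comap_coord j).sub_const _).const_mul _

lemma comap_norm_sub_sq_le_comap (θ : EuclideanSpace ℝ (Fin d)) :
    MeasurableSpace.comap (fun ω => ‖θ - X ω‖ ^ 2) inferInstance ≤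
      MeasurableSpace.comap X inferInstance := by
  have := comap_measurable (m := (inferInstance : MeasurableSpace (EuclideanSpace ℝ (Fin d)))) X
  exact Measurable.comap_le (by fun_prop)

lemma AntitoneOn.measurable_comp_norm_sub_sq {η : ℝ → ℝ} (hη : AntitoneOn η (Ici 0))
    {m : MeasurableSpace Ω} (θ : EuclideanSpace ℝ (Fin d))
    (hg : Measurable[m] fun ω => ‖θ - X ω‖ ^ 2) :
    Measurable[m] fun ω => η (‖θ - X ω‖ ^ 2) := by
  have h : (fun ω => η (‖θ - X ω‖ ^ 2)) = fun ω => η (max (‖θ - X ω‖ ^ 2) 0) :=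
    funext fun ω => by rw [max_eq_left (sq_nonneg _)]
  rw [h]
  exact hη.antitone_comp_max_zero.measurable.comp hg

variable [MeasurableSpace Ω] {μ : Measure Ω}

lemma MeasureTheory.MemLp.coord (hX : MemLp X ∞ μ) (j : Fin d) : MemLp (fun ω => X ω j) ∞ μ :=
  (EuclideanSpace.proj (𝕜 := ℝ) j).comp_memLp' hX

lemma MeasureTheory.MemLp.sum_mul_coord_sub (hX : MemLp X ∞ μ) (a θ : EuclideanSpace ℝ (Fin d)) :
    MemLp (fun ω => ∑ j, a j * (X ω j - θ j)) ∞ μ :=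
  memLp_finsetSum _ fun j _ => ((hX.coord j).sub (memLp_top_const _)).const_mul _

lemma AntitoneOn.memLp_top_comp_norm_sub_sq (hX : Measurable X) {η : ℝ → ℝ}
    (hη : AntitoneOn η (Ici 0)) (hη0 : ∀ t ∈ Ici (0 : ℝ), 0 ≤ η t)
    (θ : EuclideanSpace ℝ (Fin d)) : MemLp (fun ω => η (‖θ - X ω‖ ^ 2)) ∞ μ := by
  refine memLp_top_of_bound (hη.measurable_comp_norm_sub_sq θ ?_).aestronglyMeasurable (η 0)
    (ae_of_all _ fun ω => ?_)
  · exact ((continuous_const.sub continuous_id).norm.pow 2).measurable.comp hX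
  · have h := hη.norm_comp_max_zero_le hη0 (‖θ - X ω‖ ^ 2)
    rwa [max_eq_left (sq_nonneg _)] at h

lemma sum_mul_integral_mul_coord_sub [IsFiniteMeasure μ] (hX : MemLp X ∞ μ) {Z : Ω → ℝ}
    (hZ : Integrable Z μ) (a θ : EuclideanSpace ℝ (Fin d)) :
    ∑ j, a j * ∫ ω, Z ω * (X ω j - θ j) ∂μ = ∫ ω, Z ω * ∑ j, a j * (X ω j - θ j) ∂μ := by
  have hint : ∀ j, Integrable (fun ω => Z ω * (a j * (X ω j - θ j))) μ := fun j =>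
    hZ.mul_of_top_left (((hX.coord j).sub (memLp_const (θ j))).const_mul (a j))
  calc ∑ j, a j * ∫ ω, Z ω * (X ω j - θ j) ∂μ
      = ∑ j, ∫ ω, Z ω * (a j * (X ω j - θ j)) ∂μ := by
        refine Finset.sum_congr rfl fun j _ => ?_
        rw [← integral_const_mul]
        congr 1 with ω
        ring
    _ = ∫ ω, Z ω * ∑ j, a j * (X ω j - θ j) ∂μ := by
        rw [← integral_finsetSum _ fun j _ => hint j]
        simp only [Finset.mul_sum]

variable [IsFiniteMeasure μ]

lemma condCov_sum_mul_coord_sub_nonpos (hX : Measurable X) (hXb : MemLp X ∞ μ) {η : ℝ → ℝ}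
    (hη : AntitoneOn η (Ici 0)) (hη0 : ∀ t ∈ Ici (0 : ℝ), 0 ≤ η t)
    (θ θ0 : EuclideanSpace ℝ (Fin d)) :
    condCov (MeasurableSpace.comap (fun ω => ‖θ - X ω‖ ^ 2) inferInstance)
      (fun ω => ∑ j, (θ - θ0) j * (X ω j - θ j)) (fun ω => η (‖θ0 - X ω‖ ^ 2)) μ ≤ᵐ[μ] 0 := by
  have hm : MeasurableSpace.comap (fun ω => ‖θ - X ω‖ ^ 2) inferInstance ≤ ‹MeasurableSpace Ω› :=
    (comap_norm_sub_sq_le_comap θ).trans hX.comap_le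
  have hshift : (fun ω => η (‖θ0 - X ω‖ ^ 2)) = fun ω => η (max
      ((‖θ - X ω‖ ^ 2 + ‖θ - θ0‖ ^ 2) + 2 * ∑ j, (θ - θ0) j * (X ω j - θ j)) 0) := by
    funext ω
    have hsum : ⟪θ - θ0, X ω - θ⟫ = ∑ j, (θ - θ0) j * (X ω j - θ j) := by
      simp only [PiLp.inner_apply, PiLp.sub_apply, Real.inner_apply]
    rw [← hsum, ← norm_sub_sq_eq_add_inner, max_eq_left (sq_nonneg _)]
  rw [hshift]
  exact condCov_nonpos_of_antitone hm (hXb.sum_mul_coord_sub _ _)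
    ((comap_measurable _).add_const _) hη.antitone_comp_max_zero
    (hη.norm_comp_max_zero_le hη0) zero_le_two

end SquaredDistanceModel

theorem population_score_properties_general
    {d : ℕ} {Ω : Type*} [MeasurableSpace Ω] (μ : Measure Ω) [IsProbabilityMeasure μ]
    (χ Θ : Set (EuclideanSpace ℝ (Fin d)))
    (θ0 : EuclideanSpace ℝ (Fin d))
    -- (A1)
    (hχbd : Bornology.IsBounded χ)
    (X : Ω → EuclideanSpace ℝ (Fin d)) (ε : Ω → ℝ)
    (hXmeas : Measurable X) (hεmeas : Measurable ε)
    (hXχ : ∀ᵐ ω ∂μ, X ω ∈ χ)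
    -- (A2)
    (η0 : ℝ → ℝ)
    (hη0anti : AntitoneOn η0 (Ici 0))
    (hη0nonneg : ∀ t ∈ Ici (0 : ℝ), 0 ≤ η0 t)
    -- (A3): conditionally centered errors with finite second moment
    (hcondmean : μ[ε | MeasurableSpace.comap X inferInstance] =ᵐ[μ] 0)
    (hε2 : Integrable (fun ω => ε ω ^ 2) μ)
    -- the response
    (Y : Ω → ℝ) (hY : ∀ ω, Y ω = η0 (‖θ0 - X ω‖ ^ 2) + ε ω)
    -- the population profiled attenuation function η_θ
    (ηpop : EuclideanSpace ℝ (Fin d) → ℝ → ℝ)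
    (hηpop : ∀ θ, (fun ω => ηpop θ (‖θ - X ω‖ ^ 2)) =ᵐ[μ]
      μ[fun ω => η0 (‖θ0 - X ω‖ ^ 2) |
        MeasurableSpace.comap (fun ω => ‖θ - X ω‖ ^ 2) inferInstance])
    -- the population score map
    (Mpop : EuclideanSpace ℝ (Fin d) → EuclideanSpace ℝ (Fin d))
    (hMpop : ∀ θ, ∀ j : Fin d, Mpop θ j =
      ∫ ω, (Y ω - ηpop θ (‖θ - X ω‖ ^ 2)) * (X ω j - θ j) ∂μ) :
    ∀ θ ∈ Θ,
      -- (i) M(θ) is the expected conditional covariance of X and η0(|θ0-X|²) given |θ-X|²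
      (∀ j : Fin d, Mpop θ j =
        ∫ ω, ((μ[fun ω' => X ω' j * η0 (‖θ0 - X ω'‖ ^ 2) |
            MeasurableSpace.comap (fun ω'' => ‖θ - X ω''‖ ^ 2) inferInstance]) ω -
          (μ[fun ω' => X ω' j |
            MeasurableSpace.comap (fun ω'' => ‖θ - X ω''‖ ^ 2) inferInstance]) ω *
          (μ[fun ω' => η0 (‖θ0 - X ω'‖ ^ 2) |
            MeasurableSpace.comap (fun ω'' => ‖θ - X ω''‖ ^ 2) inferInstance]) ω) ∂μ) ∧
      -- (ii) θ0 is a zero of the population score map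
      Mpop θ0 = 0 ∧
      -- (iii) the conditional covariance has an a.s. constant (nonpositive) sign …
      (∀ᵐ ω ∂μ,
        (μ[fun ω' => (∑ j, (θ - θ0) j * (X ω' j - θ j)) * η0 (‖θ0 - X ω'‖ ^ 2) |
            MeasurableSpace.comap (fun ω'' => ‖θ - X ω''‖ ^ 2) inferInstance]) ω -
          (μ[fun ω' => ∑ j, (θ - θ0) j * (X ω' j - θ j) |
            MeasurableSpace.comap (fun ω'' => ‖θ - X ω''‖ ^ 2) inferInstance]) ω *
          (μ[fun ω' => η0 (‖θ0 - X ω'‖ ^ 2) |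
            MeasurableSpace.comap (fun ω'' => ‖θ - X ω''‖ ^ 2) inferInstance]) ω ≤ 0) ∧
      -- … so that (θ-θ0)ᵀ M(θ) equals its expectation and is nonpositive
      ((∑ j, (θ - θ0) j * Mpop θ j) =
        ∫ ω, ((μ[fun ω' => (∑ j, (θ - θ0) j * (X ω' j - θ j)) * η0 (‖θ0 - X ω'‖ ^ 2) |
            MeasurableSpace.comap (fun ω'' => ‖θ - X ω''‖ ^ 2) inferInstance]) ω -
          (μ[fun ω' => ∑ j, (θ - θ0) j * (X ω' j - θ j) |
            MeasurableSpace.comap (fun ω'' => ‖θ - X ω''‖ ^ 2) inferInstance]) ω *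
          (μ[fun ω' => η0 (‖θ0 - X ω'‖ ^ 2) |
            MeasurableSpace.comap (fun ω'' => ‖θ - X ω''‖ ^ 2) inferInstance]) ω) ∂μ) ∧
      ((∑ j, (θ - θ0) j * Mpop θ j) ≤ 0) := by
  obtain ⟨C, hC⟩ := hχbd.exists_norm_le
  have hX : MemLp X ∞ μ :=
    memLp_top_of_bound hXmeas.aestronglyMeasurable C (hXχ.mono fun ω hω => hC _ hω)
  have hε : Integrable ε μ :=
    ((memLp_two_iff_integrable_sq hεmeas.aestronglyMeasurable).2 hε2).integrable one_le_two
  have hf := hη0anti.memLp_top_comp_norm_sub_sq (μ := μ) hXmeas hη0nonneg θ0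
  have hσ := fun θ => (comap_norm_sub_sq_le_comap (X := X) θ).trans hXmeas.comap_le
  have hcoord := fun θ j => (hMpop θ j).trans <| integral_residual_mul_eq_integral_condCov (hσ θ)
    hXmeas.comap_le (hX.coord j) (measurable_comap_coord j).stronglyMeasurable hf hε hcondmean hY
    (hηpop θ) (θ j)
  intro θ _
  have hinner : ∑ j, (θ - θ0) j * Mpop θ j = ∫ ω, condCov
      (MeasurableSpace.comap (fun ω => ‖θ - X ω‖ ^ 2) inferInstance)
      (fun ω => ∑ j, (θ - θ0) j * (X ω j - θ j)) (fun ω => η0 (‖θ0 - X ω‖ ^ 2)) μ ω ∂μ := by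
    simp only [hMpop θ]
    rw [sum_mul_integral_mul_coord_sub hX
        (integrable_residual (hf.integrable le_top) hε hY (hηpop θ)),
      ← integral_residual_mul_eq_integral_condCov (hσ θ) hXmeas.comap_le
        (hX.sum_mul_coord_sub _ _) (measurable_comap_sum_mul_coord_sub _ _).stronglyMeasurable
        hf hε hcondmean hY (hηpop θ) 0]
    simp only [sub_zero]
  have hsign := condCov_sum_mul_coord_sub_nonpos (μ := μ) hXmeas hX hη0anti hη0nonneg θ θ0
  refine ⟨hcoord θ, ?_, hsign, hinner, hinner ▸ integral_nonpos_of_ae hsign⟩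
  ext j
  rw [hcoord, integral_congr_ae (condCov_ae_eq_zero_of_stronglyMeasurable (hσ θ0) (hX.coord j)
    hf (hη0anti.measurable_comp_norm_sub_sq θ0 (comap_measurable _)).stronglyMeasurable)]
  simp

/-- **Lemma F.1, displays (eq:m_cov) and part (1).** Under (A1)–(A3) with `η0` nonincreasing
and `M(θ) = E[(Y - η_θ(|θ-X|²))(X - θ)]`:
(i) `M(θ) = E[Cov(X, η0(|θ0-X|²) | |θ-X|²)]` coordinatewise;
(ii) `M(θ0) = 0`; and
(iii) `Cov((θ-θ0)ᵀ(X-θ), η0(|θ0-X|²) | |θ-X|²)` is almost surely nonpositive, so that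
`(θ-θ0)ᵀ M(θ) = E[Cov((θ-θ0)ᵀ(X-θ), η0(|θ0-X|²) | |θ-X|²)] ≤ 0`. -/
theorem population_score_properties
    {d : ℕ} {Ω : Type*} [MeasurableSpace Ω] (μ : Measure Ω) [IsProbabilityMeasure μ]
    (χ Θ : Set (EuclideanSpace ℝ (Fin d))) (T : ℝ)
    (θ0 : EuclideanSpace ℝ (Fin d))
    -- (A1)
    (hχbd : Bornology.IsBounded χ) (hχconv : Convex ℝ χ)
    (hχint : (interior χ).Nonempty)
    (hΘbd : Bornology.IsBounded Θ) (hΘint : (interior Θ).Nonempty)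
    (hθ0 : θ0 ∈ interior Θ)
    (hχT : ∀ x ∈ χ, ‖x‖ ≤ T) (hΘT : ∀ θ ∈ Θ, ‖θ‖ ≤ T)
    (X : Ω → EuclideanSpace ℝ (Fin d)) (ε : Ω → ℝ)
    (hXmeas : Measurable X) (hεmeas : Measurable ε)
    (hXχ : ∀ᵐ ω ∂μ, X ω ∈ χ)
    (Cdens : ℝ)
    (hdens : ∀ s, Measure.map X μ s ≤ ENNReal.ofReal Cdens * volume s)
    -- (A2)
    (η0 : ℝ → ℝ)
    (hη0diff : ContDiffOn ℝ 1 η0 (Ici 0))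
    (hη0anti : AntitoneOn η0 (Ici 0))
    (hη0nonneg : ∀ t ∈ Ici (0 : ℝ), 0 ≤ η0 t)
    -- (A3): conditionally centered errors with finite second moment
    (hcondmean : μ[ε | MeasurableSpace.comap X inferInstance] =ᵐ[μ] 0)
    (hε2 : Integrable (fun ω => ε ω ^ 2) μ)
    -- the response
    (Y : Ω → ℝ) (hY : ∀ ω, Y ω = η0 (‖θ0 - X ω‖ ^ 2) + ε ω)
    -- the population profiled attenuation function η_θ
    (ηpop : EuclideanSpace ℝ (Fin d) → ℝ → ℝ)
    (hηpop : ∀ θ, (fun ω => ηpop θ (‖θ - X ω‖ ^ 2)) =ᵐ[μ]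
      μ[fun ω => η0 (‖θ0 - X ω‖ ^ 2) |
        MeasurableSpace.comap (fun ω => ‖θ - X ω‖ ^ 2) inferInstance])
    -- the population score map
    (Mpop : EuclideanSpace ℝ (Fin d) → EuclideanSpace ℝ (Fin d))
    (hMpop : ∀ θ, ∀ j : Fin d, Mpop θ j =
      ∫ ω, (Y ω - ηpop θ (‖θ - X ω‖ ^ 2)) * (X ω j - θ j) ∂μ) :
    ∀ θ ∈ Θ,
      -- (i) M(θ) is the expected conditional covariance of X and η0(|θ0-X|²) given |θ-X|²
      (∀ j : Fin d, Mpop θ j =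
        ∫ ω, ((μ[fun ω' => X ω' j * η0 (‖θ0 - X ω'‖ ^ 2) |
            MeasurableSpace.comap (fun ω'' => ‖θ - X ω''‖ ^ 2) inferInstance]) ω -
          (μ[fun ω' => X ω' j |
            MeasurableSpace.comap (fun ω'' => ‖θ - X ω''‖ ^ 2) inferInstance]) ω *
          (μ[fun ω' => η0 (‖θ0 - X ω'‖ ^ 2) |
            MeasurableSpace.comap (fun ω'' => ‖θ - X ω''‖ ^ 2) inferInstance]) ω) ∂μ) ∧
      -- (ii) θ0 is a zero of the population score map
      Mpop θ0 = 0 ∧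
      -- (iii) the conditional covariance has an a.s. constant (nonpositive) sign …
      (∀ᵐ ω ∂μ,
        (μ[fun ω' => (∑ j, (θ - θ0) j * (X ω' j - θ j)) * η0 (‖θ0 - X ω'‖ ^ 2) |
            MeasurableSpace.comap (fun ω'' => ‖θ - X ω''‖ ^ 2) inferInstance]) ω -
          (μ[fun ω' => ∑ j, (θ - θ0) j * (X ω' j - θ j) |
            MeasurableSpace.comap (fun ω'' => ‖θ - X ω''‖ ^ 2) inferInstance]) ω *
          (μ[fun ω' => η0 (‖θ0 - X ω'‖ ^ 2) |
            MeasurableSpace.comap (fun ω'' => ‖θ - X ω''‖ ^ 2) inferInstance]) ω ≤ 0) ∧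
      -- … so that (θ-θ0)ᵀ M(θ) equals its expectation and is nonpositive
      ((∑ j, (θ - θ0) j * Mpop θ j) =
        ∫ ω, ((μ[fun ω' => (∑ j, (θ - θ0) j * (X ω' j - θ j)) * η0 (‖θ0 - X ω'‖ ^ 2) |
            MeasurableSpace.comap (fun ω'' => ‖θ - X ω''‖ ^ 2) inferInstance]) ω -
          (μ[fun ω' => ∑ j, (θ - θ0) j * (X ω' j - θ j) |
            MeasurableSpace.comap (fun ω'' => ‖θ - X ω''‖ ^ 2) inferInstance]) ω *
          (μ[fun ω' => η0 (‖θ0 - X ω'‖ ^ 2) |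
            MeasurableSpace.comap (fun ω'' => ‖θ - X ω''‖ ^ 2) inferInstance]) ω) ∂μ) ∧
      ((∑ j, (θ - θ0) j * Mpop θ j) ≤ 0) :=
  population_score_properties_general μ χ Θ θ0 hχbd X ε hXmeas hεmeas hXχ η0 hη0anti hη0nonneg
    hcondmean hε2 Y hY ηpop hηpop Mpop hMpop
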